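/- For every p ≥ 1, the p-measure ν_p satisfies the Λ*-condition: lim_{x→∞} (-ln ν_p([x,∞)))/Λ_{ν_p}*(x) = 1. -/

import Mathlib

open MeasureTheory Filter Set Real Topology
open scoped ENNReal NNReal

noncomputable def nup (p : ℝ) : Measure ℝ :=
  volume.withDensity fun x =>
    ENNReal.ofReal ((2 * Real.Gamma (1 + 1 / p))⁻¹ * exp (-(|x| ^ p)))

noncomputable def LambdaP (p t : ℝ) : ℝ := log (∫ s, exp (t * s) ∂(nup p))

noncomputable def LambdaPStar (p x : ℝ) : ℝ :=
  ⨆ t : {t : ℝ // Integrable (fun s => exp (t * s)) (nup p)},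
    ((t : ℝ) * x - LambdaP p t)

section aux
variable {p : ℝ} (hp : 1 ≤ p)

lemma hp0 (hp : 1 ≤ p) : 0 < p := lt_of_lt_of_le one_pos hp

lemma gamma_pos (hp : 1 ≤ p) : 0 < Real.Gamma (1 + 1 / p) :=
  Real.Gamma_pos_of_pos (by positivity)

lemma c_pos (hp : 1 ≤ p) : 0 < (2 * Real.Gamma (1 + 1 / p))⁻¹ := by
  have := gamma_pos hp; positivity

/-- integrability of the base function -/
lemma int_base (hp : 1 ≤ p) {b : ℝ} (hb : 0 < b) :
    Integrable (fun x : ℝ => exp (-(b * |x| ^ p))) := by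
  have h0 : (0:ℝ) < p := hp0 hp
  have key : Integrable (fun x : ℝ => exp (-(|x| ^ p))) := by
    have hIoi : IntegrableOn (fun x : ℝ => exp (-(|x| ^ p))) (Ioi 0) := by
      have := integrableOn_rpow_mul_exp_neg_rpow (p := p) (s := 0) (by norm_num) h0
      refine (this.congr_fun (fun x hx => ?_) measurableSet_Ioi)
      dsimp only
      rw [rpow_zero, one_mul, abs_of_pos (by exact hx)]
    have hIic : IntegrableOn (fun x : ℝ => exp (-(|x| ^ p))) (Iic 0) := by
      rw [← Measure.map_neg_eq_self (volume : Measure ℝ)]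
      have m : MeasurableEmbedding fun x : ℝ => -x :=
        (Homeomorph.neg ℝ).measurableEmbedding
      rw [m.integrableOn_map_iff]
      simp_rw [Function.comp_def, abs_neg, neg_preimage, neg_Iic, neg_zero]
      exact (integrableOn_Ici_iff_integrableOn_Ioi).mpr hIoi
    have := hIic.union hIoi
    rwa [Iic_union_Ioi, integrableOn_univ] at this
  have heq : (fun x : ℝ => exp (-(b * |x| ^ p)))
      = fun x : ℝ => exp (-(|b ^ (1/p) * x| ^ p)) := by
    funext x
    rw [abs_mul, mul_rpow (abs_nonneg _) (abs_nonneg _),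
      abs_of_pos (rpow_pos_of_pos hb _), ← Real.rpow_mul hb.le,
      one_div, inv_mul_cancel₀ h0.ne', rpow_one]
  rw [heq]
  exact (integrable_comp_mul_left_iff _ (by positivity)).mpr key

lemma val_base (hp : 1 ≤ p) {b : ℝ} (hb : 0 < b) :
    ∫ x : ℝ, exp (-(b * |x| ^ p)) = b ^ (-1/p) * (2 * Real.Gamma (1 + 1/p)) := by
  have h0 : (0:ℝ) < p := hp0 hp
  have : ∫ x : ℝ, exp (-(b * |x| ^ p)) = ∫ x : ℝ, (fun y => exp (-b * y ^ p)) |x| := by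
    congr 1; funext x; simp [neg_mul]
  rw [this, integral_comp_abs (f := fun y => exp (-b * y ^ p)),
    integral_exp_neg_mul_rpow h0 hb]
  rw [add_comm (1/p) 1]
  ring

/-- the density of `nup` as a real function -/
noncomputable def dens (p : ℝ) (x : ℝ) : ℝ :=
  (2 * Real.Gamma (1 + 1/p))⁻¹ * exp (-(|x| ^ p))

lemma dens_pos (hp : 1 ≤ p) (x : ℝ) : 0 < dens p x := by
  have := gamma_pos hp
  unfold dens; positivity

lemma meas_dens : Measurable fun x => (dens p x).toNNReal := by
  unfold dens; measurability

lemma nup_eq : nup p = volume.withDensity fun x => ((dens p x).toNNReal : ℝ≥0∞) := by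
  rfl

lemma nup_integral (hp : 1 ≤ p) (h : ℝ → ℝ) :
    ∫ s, h s ∂(nup p) = ∫ s, dens p s * h s := by
  rw [nup_eq, integral_withDensity_eq_integral_smul meas_dens]
  congr 1; funext s
  simp only [NNReal.smul_def, smul_eq_mul, Real.coe_toNNReal _ (dens_pos hp s).le]

lemma nup_integrable_iff (hp : 1 ≤ p) (h : ℝ → ℝ) :
    Integrable h (nup p) ↔ Integrable (fun s => dens p s * h s) volume := by
  rw [nup_eq, integrable_withDensity_iff_integrable_smul meas_dens]
  constructor <;> intro hi <;> refine hi.congr (Eventually.of_forall fun s => ?_) <;>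
    simp only [NNReal.smul_def, smul_eq_mul, Real.coe_toNNReal _ (dens_pos hp s).le]

lemma int_dens (hp : 1 ≤ p) : Integrable (dens p) := by
  unfold dens
  refine ((int_base hp one_pos).const_mul ((2 * Real.Gamma (1 + 1/p))⁻¹)).congr
    (Eventually.of_forall fun x => ?_)
  norm_num

lemma integral_dens (hp : 1 ≤ p) : ∫ x, dens p x = 1 := by
  unfold dens
  rw [integral_const_mul]
  have := val_base hp one_pos
  simp only [one_mul] at this
  rw [this]
  rw [Real.one_rpow]
  have := (gamma_pos hp).ne'
  field_simp

lemma nup_prob (hp : 1 ≤ p) : IsProbabilityMeasure (nup p) := by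
  constructor
  rw [nup_eq, withDensity_apply _ MeasurableSet.univ, Measure.restrict_univ]
  have h1 : ∀ x : ℝ, ((dens p x).toNNReal : ℝ≥0∞) = ENNReal.ofReal (dens p x) := fun x => rfl
  simp_rw [h1]
  rw [← ofReal_integral_eq_lintegral_ofReal (int_dens hp)
    (Eventually.of_forall fun x => (dens_pos hp x).le), integral_dens hp, ENNReal.ofReal_one]

lemma nup_Ici_toReal (hp : 1 ≤ p) (x : ℝ) :
    ((nup p) (Ici x)).toReal = ∫ s in Ici x, dens p s := by
  rw [nup_eq, withDensity_apply _ measurableSet_Ici]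
  have h1 : ∀ s : ℝ, ((dens p s).toNNReal : ℝ≥0∞) = ENNReal.ofReal (dens p s) := fun s => rfl
  simp_rw [h1]
  rw [← ofReal_integral_eq_lintegral_ofReal ((int_dens hp).integrableOn)
    (Eventually.of_forall fun s => (dens_pos hp s).le),
    ENNReal.toReal_ofReal (setIntegral_nonneg measurableSet_Ici
      fun s _ => (dens_pos hp s).le)]

lemma nup_Ici_lb (hp : 1 ≤ p) {x : ℝ} (hx : 0 ≤ x) :
    dens p (x+1) ≤ ((nup p) (Ici x)).toReal := by
  rw [nup_Ici_toReal hp]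
  have h1 : ∫ s in Icc x (x+1), dens p s ≤ ∫ s in Ici x, dens p s := by
    refine setIntegral_mono_set (int_dens hp).integrableOn
      (Eventually.of_forall fun s => (dens_pos hp s).le)
      (HasSubset.Subset.eventuallyLE Icc_subset_Ici_self)
  refine le_trans ?_ h1
  have h2 : ∫ s in Icc x (x+1), dens p (x+1) ≤ ∫ s in Icc x (x+1), dens p s := by
    refine setIntegral_mono_on ((integrableOn_const_iff).mpr (Or.inr ?_))
      (int_dens hp).integrableOn measurableSet_Icc (fun s hs => ?_)
    · rw [Real.volume_Icc]; exact ENNReal.ofReal_lt_top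
    · unfold dens
      have h3 : |s| ^ p ≤ |x+1| ^ p := by
        refine rpow_le_rpow (abs_nonneg _) ?_ (hp0 hp).le
        rw [abs_of_nonneg (le_trans hx hs.1), abs_of_nonneg (by linarith)]
        exact hs.2
      have := gamma_pos hp
      exact mul_le_mul_of_nonneg_left (Real.exp_le_exp.mpr (neg_le_neg h3)) (c_pos hp).le
  refine le_trans (le_of_eq ?_) h2
  rw [setIntegral_const, Real.volume_real_Icc_of_le (by linarith), smul_eq_mul]
  rw [show x + 1 - x = 1 by ring, one_mul]

lemma nup_Ici_pos (hp : 1 ≤ p) {x : ℝ} (hx : 0 ≤ x) :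
    0 < ((nup p) (Ici x)).toReal :=
  lt_of_lt_of_le (dens_pos hp (x+1)) (nup_Ici_lb hp hx)

lemma nup_Ici_le_one (hp : 1 ≤ p) (x : ℝ) : ((nup p) (Ici x)).toReal ≤ 1 := by
  have := nup_prob hp
  rw [← ENNReal.toReal_one]
  exact ENNReal.toReal_mono ENNReal.one_ne_top prob_le_one

lemma T_nonneg (hp : 1 ≤ p) {x : ℝ} (hx : 0 ≤ x) :
    0 ≤ -log (((nup p) (Ici x)).toReal) := by
  rw [neg_nonneg]
  exact Real.log_nonpos (nup_Ici_pos hp hx).le (nup_Ici_le_one hp x)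

lemma T_ub (hp : 1 ≤ p) {x : ℝ} (hx : 0 ≤ x) :
    -log (((nup p) (Ici x)).toReal) ≤ (x+1) ^ p + log (2 * Real.Gamma (1 + 1/p)) := by
  have h1 := Real.log_le_log (dens_pos hp (x+1)) (nup_Ici_lb hp hx)
  have h2 : log (dens p (x+1)) = -log (2 * Real.Gamma (1 + 1/p)) - |x+1| ^ p := by
    unfold dens
    rw [Real.log_mul (by have := gamma_pos hp; positivity) (Real.exp_ne_zero _),
      Real.log_inv, Real.log_exp]
    ring
  rw [abs_of_nonneg (by linarith)] at h2
  linarith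

lemma LambdaP_nonneg (hp : 1 ≤ p) {t : ℝ}
    (ht : Integrable (fun s => exp (t * s)) (nup p)) : 0 ≤ LambdaP p t := by
  have hint : Integrable (fun s => dens p s * exp (t * s)) volume :=
    (nup_integrable_iff hp _).mp ht
  have hneg : Integrable (fun s => dens p s * exp (-(t * s))) volume := by
    have := hint.comp_neg (μ := volume)
    refine this.congr (Eventually.of_forall fun s => ?_)
    simp [dens, abs_neg, mul_comm]
  have hsym : ∫ s, dens p s * exp (t * s) = ∫ s, dens p s * exp (-(t * s)) := by
    rw [← integral_neg_eq_self (fun s => dens p s * exp (t * s)) volume]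
    congr 1; funext s; simp [dens, abs_neg, mul_comm]
  have key : (1:ℝ) ≤ ∫ s, exp (t * s) ∂(nup p) := by
    rw [nup_integral hp]
    have h2 : ∫ s, dens p s ≤ ∫ s, dens p s * ((exp (t*s) + exp (-(t*s)))/2) := by
      refine integral_mono (int_dens hp) (by
        refine ((hint.add hneg).div_const 2).congr (Eventually.of_forall fun s => ?_)
        simp only [Pi.add_apply]; ring) (fun s => ?_)
      have h3 : (1:ℝ) ≤ (exp (t*s) + exp (-(t*s)))/2 := by
        nlinarith [Real.add_one_le_exp (t*s), Real.add_one_le_exp (-(t*s))]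
      nlinarith [dens_pos hp s]
    have h4 : ∫ s, dens p s * ((exp (t*s) + exp (-(t*s)))/2)
        = ((∫ s, dens p s * exp (t*s)) + ∫ s, dens p s * exp (-(t*s)))/2 := by
      rw [← integral_add hint hneg, ← integral_div]
      congr 1; funext s; ring
    rw [integral_dens hp] at h2
    rw [h4, ← hsym] at h2
    linarith
  exact Real.log_nonneg key

lemma key_ub (hp : 1 ≤ p) {x t : ℝ} (hx : 0 ≤ x)
    (ht : Integrable (fun s => exp (t * s)) (nup p)) :
    t * x - LambdaP p t ≤ -log (((nup p) (Ici x)).toReal) := by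
  haveI := nup_prob hp
  have hmgf : 0 < ∫ s, exp (t * s) ∂(nup p) := integral_exp_pos ht
  have hm := nup_Ici_pos hp hx
  rcases le_or_gt 0 t with h | h
  · have markov := mul_meas_ge_le_integral_of_nonneg (μ := nup p)
      (f := fun s => exp (t * s)) (Eventually.of_forall fun s => (exp_pos _).le) ht (exp (t * x))
    have hsub : Ici x ⊆ {s : ℝ | exp (t*x) ≤ exp (t*s)} := fun s hs => by
      simp only [mem_setOf_eq, exp_le_exp]
      exact mul_le_mul_of_nonneg_left hs h
    have hmono : ((nup p) (Ici x)).toReal ≤ ((nup p) {s | exp (t*x) ≤ exp (t*s)}).toReal :=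
      ENNReal.toReal_mono (measure_ne_top _ _) (measure_mono hsub)
    have h2 : exp (t*x) * ((nup p) (Ici x)).toReal ≤ ∫ s, exp (t*s) ∂(nup p) :=
      le_trans (mul_le_mul_of_nonneg_left hmono (exp_pos _).le) markov
    have h3 := Real.log_le_log (by positivity) h2
    rw [Real.log_mul (exp_ne_zero _) hm.ne', Real.log_exp] at h3
    unfold LambdaP
    linarith
  · have h1 : t * x ≤ 0 := mul_nonpos_of_nonpos_of_nonneg h.le hx
    have h2 := LambdaP_nonneg hp ht
    have h3 := T_nonneg hp hx
    linarith

lemma young (hp : 1 ≤ p) {a x : ℝ} (ha : 0 ≤ a) (hx : 0 ≤ x) :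
    p * x ^ (p-1) * a ≤ a ^ p + (p-1) * x ^ p := by
  have h0 : (0:ℝ) < p := hp0 hp
  have key := Real.geom_mean_le_arith_mean2_weighted
    (w₁ := 1/p) (w₂ := 1 - 1/p) (p₁ := a ^ p) (p₂ := x ^ p)
    (by positivity) (by
      have : 1/p ≤ 1 := by rw [div_le_one h0]; exact hp
      linarith)
    (rpow_nonneg ha p) (rpow_nonneg hx p) (by ring)
  rw [← Real.rpow_mul ha, ← Real.rpow_mul hx, mul_one_div_cancel h0.ne', rpow_one,
    show p * (1 - 1/p) = p - 1 by field_simp] at key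
  calc p * x ^ (p-1) * a = p * (a * x ^ (p-1)) := by ring
    _ ≤ p * (1/p * a ^ p + (1 - 1/p) * x ^ p) := mul_le_mul_of_nonneg_left key h0.le
    _ = a ^ p + (p-1) * x ^ p := by field_simp

lemma pointwise_bd (hp : 1 ≤ p) {θ x : ℝ} (hθ0 : 0 ≤ θ) (hx : 0 ≤ x) (s : ℝ) :
    dens p s * exp ((θ * p * x ^ (p-1)) * s)
      ≤ exp (θ * (p-1) * x ^ p) *
        ((2 * Real.Gamma (1 + 1/p))⁻¹ * exp (-((1-θ) * |s| ^ p))) := by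
  have h0 := hp0 hp
  have ht0 : 0 ≤ θ * p * x ^ (p-1) := by positivity
  have h1 : (θ * p * x ^ (p-1)) * s ≤ θ * p * x ^ (p-1) * |s| :=
    mul_le_mul_of_nonneg_left (le_abs_self s) ht0
  have h2 := young hp (abs_nonneg s) hx
  have h3 : θ * p * x ^ (p-1) * |s| ≤ θ * (|s| ^ p + (p-1) * x ^ p) := by
    calc θ * p * x ^ (p-1) * |s| = θ * (p * x ^ (p-1) * |s|) := by ring
    _ ≤ _ := mul_le_mul_of_nonneg_left h2 hθ0
  have hexp : exp (-(|s| ^ p)) * exp ((θ * p * x ^ (p-1)) * s)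
      ≤ exp (θ * (p-1) * x ^ p) * exp (-((1-θ) * |s| ^ p)) := by
    rw [← Real.exp_add, ← Real.exp_add]
    exact Real.exp_le_exp.mpr (by nlinarith)
  calc dens p s * exp ((θ * p * x ^ (p-1)) * s)
      = (2 * Real.Gamma (1 + 1/p))⁻¹ * (exp (-(|s| ^ p)) * exp ((θ * p * x ^ (p-1)) * s)) := by
        unfold dens; ring
    _ ≤ (2 * Real.Gamma (1 + 1/p))⁻¹ *
        (exp (θ * (p-1) * x ^ p) * exp (-((1-θ) * |s| ^ p))) :=
        mul_le_mul_of_nonneg_left hexp (c_pos hp).le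
    _ = _ := by ring

lemma mgf_int_and_ub (hp : 1 ≤ p) {θ x : ℝ} (hθ0 : 0 ≤ θ) (hθ1 : θ < 1) (hx : 0 ≤ x) :
    Integrable (fun s => exp ((θ * p * x ^ (p-1)) * s)) (nup p) ∧
    ∫ s, exp ((θ * p * x ^ (p-1)) * s) ∂(nup p)
      ≤ exp (θ * (p-1) * x ^ p) * (1-θ) ^ ((-1)/p) := by
  have h0 := hp0 hp
  have hb : (0:ℝ) < 1 - θ := by linarith
  have hg : Integrable (fun s : ℝ => exp (θ * (p-1) * x ^ p) *
      ((2 * Real.Gamma (1 + 1/p))⁻¹ * exp (-((1-θ) * |s| ^ p)))) volume :=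
    (((int_base hp hb).const_mul _).const_mul _)
  have hmeas : AEStronglyMeasurable
      (fun s => dens p s * exp ((θ * p * x ^ (p-1)) * s)) volume := by
    have m1 : Measurable (dens p) := by unfold dens; measurability
    exact (m1.mul ((measurable_id.const_mul _).exp)).aestronglyMeasurable
  have hintd : Integrable (fun s => dens p s * exp ((θ * p * x ^ (p-1)) * s)) volume := by
    refine hg.mono' hmeas (Eventually.of_forall fun s => ?_)
    rw [Real.norm_of_nonneg (by have := dens_pos hp s; positivity)]
    exact pointwise_bd hp hθ0 hx s
  have hint : Integrable (fun s => exp ((θ * p * x ^ (p-1)) * s)) (nup p) :=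
    (nup_integrable_iff hp _).mpr hintd
  refine ⟨hint, ?_⟩
  rw [nup_integral hp]
  have h4 : ∫ s, dens p s * exp ((θ * p * x ^ (p-1)) * s)
      ≤ ∫ s : ℝ, exp (θ * (p-1) * x ^ p) *
        ((2 * Real.Gamma (1 + 1/p))⁻¹ * exp (-((1-θ) * |s| ^ p))) :=
    integral_mono hintd hg (fun s => pointwise_bd hp hθ0 hx s)
  rw [integral_const_mul, integral_const_mul, val_base hp hb] at h4
  have hΓ := (gamma_pos hp).ne'
  calc ∫ s, dens p s * exp ((θ * p * x ^ (p-1)) * s) ≤ _ := h4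
    _ = exp (θ * (p-1) * x ^ p) * (1-θ) ^ ((-1)/p) := by field_simp

lemma nonempty_index (hp : 1 ≤ p) :
    Nonempty {t : ℝ // Integrable (fun s => exp (t * s)) (nup p)} := by
  haveI := nup_prob hp
  exact ⟨⟨0, by simpa using integrable_const (μ := nup p) (1:ℝ)⟩⟩

lemma bddAbove_index (hp : 1 ≤ p) {x : ℝ} (hx : 0 ≤ x) :
    BddAbove (Set.range fun t : {t : ℝ // Integrable (fun s => exp (t * s)) (nup p)} =>
      (t : ℝ) * x - LambdaP p t) := by
  refine ⟨-log (((nup p) (Ici x)).toReal), ?_⟩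
  rintro y ⟨t, rfl⟩
  exact key_ub hp hx t.2

lemma LambdaPStar_ub (hp : 1 ≤ p) {x : ℝ} (hx : 0 ≤ x) :
    LambdaPStar p x ≤ -log (((nup p) (Ici x)).toReal) := by
  haveI := nonempty_index hp
  exact ciSup_le fun t => key_ub hp hx t.2

lemma LambdaPStar_lb (hp : 1 ≤ p) {θ x : ℝ} (hθ0 : 0 ≤ θ) (hθ1 : θ < 1) (hx : 0 < x) :
    θ * x ^ p - log ((1-θ) ^ ((-1)/p)) ≤ LambdaPStar p x := by
  haveI := nup_prob hp
  obtain ⟨hint, hub⟩ := mgf_int_and_ub hp hθ0 hθ1 hx.le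
  have hmgf : 0 < ∫ s, exp ((θ * p * x ^ (p-1)) * s) ∂(nup p) := integral_exp_pos hint
  have hΛ : LambdaP p (θ * p * x ^ (p-1))
      ≤ θ * (p-1) * x ^ p + log ((1-θ) ^ ((-1)/p)) := by
    have h1 := Real.log_le_log hmgf hub
    rwa [Real.log_mul (exp_ne_zero _)
      ((rpow_pos_of_pos (by linarith) _).ne' : ((1-θ):ℝ) ^ ((-1)/p) ≠ 0),
      Real.log_exp] at h1
  have h2 : (θ * p * x ^ (p-1)) * x - LambdaP p (θ * p * x ^ (p-1)) ≤ LambdaPStar p x :=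
    le_ciSup (bddAbove_index hp hx.le) ⟨_, hint⟩
  have h3 : (θ * p * x ^ (p-1)) * x = θ * p * x ^ p := by
    have h4 := Real.rpow_add hx (p-1) 1
    rw [Real.rpow_one, show p - 1 + 1 = p by ring] at h4
    rw [mul_assoc, ← h4]
  rw [h3] at h2
  linarith

end aux

theorem stmt19 (p : ℝ) (hp : 1 ≤ p) :
    Tendsto (fun x : ℝ => (-log (((nup p) (Ici x)).toReal)) / LambdaPStar p x)
      atTop (𝓝 1) := by
  have h0 := hp0 hp
  rw [Metric.tendsto_nhds]
  intro ε hε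
  set θ : ℝ := (1 + ε/2)⁻¹ with hθdef
  have hθ0 : 0 < θ := by positivity
  have hθ1 : θ < 1 := by
    rw [hθdef]
    rw [inv_lt_one_iff₀]
    right; linarith
  set B : ℝ := log ((1-θ) ^ ((-1)/p)) with hBdef
  set C : ℝ := log (2 * Real.Gamma (1 + 1/p)) with hCdef
  set δ : ℝ := (1+ε)*θ - 1 with hδdef
  have hδ0 : 0 < δ := by
    have h1 : 1 < (1+ε)/(1+ε/2) := (one_lt_div (by linarith : (0:ℝ) < 1+ε/2)).mpr (by linarith)
    rw [div_eq_mul_inv] at h1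
    rw [hδdef, hθdef]; linarith
  have hxp : Tendsto (fun x : ℝ => x ^ p) atTop atTop := tendsto_rpow_atTop h0
  -- limit of the comparison ratio
  have t1 : Tendsto (fun x : ℝ => (x+1)/x) atTop (𝓝 1) := by
    have base : Tendsto (fun x : ℝ => 1 + x⁻¹) atTop (𝓝 (1 + 0)) :=
      tendsto_const_nhds.add tendsto_inv_atTop_zero
    rw [add_zero] at base
    refine base.congr' ?_
    filter_upwards [eventually_gt_atTop (0:ℝ)] with x hx
    field_simp
  have t2 : Tendsto (fun x : ℝ => ((x+1)/x) ^ p) atTop (𝓝 1) := by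
    have cont := (Real.continuousAt_rpow_const 1 p (Or.inl one_ne_zero)).tendsto
    have := cont.comp t1
    simpa [Real.one_rpow, Function.comp_def] using this
  have t3 : Tendsto (fun x : ℝ => (C + (1+ε)*B)/x ^ p) atTop (𝓝 0) := by
    simp_rw [div_eq_mul_inv]
    have := hxp.inv_tendsto_atTop.const_mul (C + (1+ε)*B)
    simpa using this
  have hg : Tendsto (fun x : ℝ => ((x+1)/x) ^ p + (C + (1+ε)*B)/x ^ p) atTop (𝓝 1) := by
    have := t2.add t3
    simpa using this
  have ev1 : ∀ᶠ x : ℝ in atTop, ((x+1)/x) ^ p + (C + (1+ε)*B)/x ^ p < 1 + δ :=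
    hg.eventually (gt_mem_nhds (by linarith))
  have ev2 : ∀ᶠ x : ℝ in atTop, B/θ < x ^ p := hxp.eventually_gt_atTop (B/θ)
  filter_upwards [ev1, ev2, eventually_gt_atTop (0:ℝ)] with x h1 h2 h3
  have hxp0 : 0 < x ^ p := rpow_pos_of_pos h3 p
  have hB : B < θ * x ^ p := by rwa [div_lt_iff₀' hθ0] at h2
  -- numerator comparison
  have h4 : (x+1) ^ p + (C + (1+ε)*B) < (1+δ) * x ^ p := by
    have hdiv : ((x+1)/x) ^ p = (x+1) ^ p / x ^ p :=
      Real.div_rpow (by linarith) h3.le p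
    rw [hdiv, ← add_div] at h1
    exact (div_lt_iff₀ hxp0).mp h1
  have h5 : (x+1) ^ p + C < (1+ε) * (θ * x ^ p - B) := by
    have : (1+δ) * x ^ p = (1+ε) * (θ * x ^ p) := by rw [hδdef]; ring
    rw [this] at h4
    nlinarith
  -- bounds on numerator and denominator
  have hT_ub : -log (((nup p) (Ici x)).toReal) ≤ (x+1) ^ p + C := T_ub hp h3.le
  have hT0 : 0 ≤ -log (((nup p) (Ici x)).toReal) := T_nonneg hp h3.le
  have hL_lb : θ * x ^ p - B ≤ LambdaPStar p x := LambdaPStar_lb hp hθ0.le hθ1 h3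
  have hL_ub : LambdaPStar p x ≤ -log (((nup p) (Ici x)).toReal) := LambdaPStar_ub hp h3.le
  have hd0 : 0 < θ * x ^ p - B := by linarith
  have hL0 : 0 < LambdaPStar p x := lt_of_lt_of_le hd0 hL_lb
  set T := -log (((nup p) (Ici x)).toReal)
  set L := LambdaPStar p x
  have hR1 : 1 ≤ T / L := (one_le_div hL0).mpr hL_ub
  have hR2 : T / L < 1 + ε := by
    have hstep : T / L ≤ T / (θ * x ^ p - B) :=
      div_le_div_of_nonneg_left hT0 hd0 hL_lb
    refine lt_of_le_of_lt hstep ?_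
    rw [div_lt_iff₀ hd0]
    linarith
  rw [Real.dist_eq, abs_of_nonneg (by linarith)]
  linarith
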